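/- arXiv:2304.08983 — 6 statements merged into one kernel-verified Lean document; each statement's English description precedes it below -/
import Mathlib

section
/- Let Φ : X → ∏_{i=1}^p ℝ^{n_i}. Suppose there exists a constant M ≥ 0 such that ‖Φ(x₁) − Φ(x₂)‖ ≤ M·‖Φ(x₁) − Φ(x₂) + e‖ for all x₁, x₂ ∈ X and all block vectors e with at most k nonzero blocks (with the sup norm). Then for every index set I ⊆ {1,...,p} with |I| ≥ p−k, one has ‖Φ(x₁) − Φ(x₂)‖ ≤ M·‖Φ_I(x₁) − Φ_I(x₂)‖ for all x₁, x₂ ∈ X, where Φ_I = π_I ∘ Φ. -/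
open scoped Classical

/-- Projection of a block vector onto the blocks indexed by `I`. -/
noncomputable def blockProj {p : ℕ} {n : Fin p → ℕ} (I : Finset (Fin p))
    (v : ∀ i : Fin p, Fin (n i) → ℝ) : ∀ i : ↥I, Fin (n i) → ℝ :=
  fun i => v i

/-- Number of nonzero blocks of a block vector. -/
noncomputable def blockSupp {p : ℕ} {n : Fin p → ℕ}
    (v : ∀ i : Fin p, Fin (n i) → ℝ) : ℕ :=
  (Finset.univ.filter fun i => v i ≠ 0).card

/-- `Φ` is `k`-redundant: for every index set with at least `p - k` elements,
the projection onto those blocks is injective on the image of `Φ`. -/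
def Redundant {X : Type*} {p : ℕ} {n : Fin p → ℕ}
    (Φ : X → ∀ i : Fin p, Fin (n i) → ℝ) (k : ℕ) : Prop :=
  ∀ I : Finset (Fin p), p - k ≤ I.card →
    Set.InjOn (blockProj I) (Set.range Φ)

/-
Given `I` with `|I| ≥ p - k`, take `e := 1_I · d - d` for `d = Φ x₁ - Φ x₂`. It vanishes on `I`,
so it has at most `p - |I| ≤ k` nonzero blocks, and `d + e` is `d` with the blocks outside `I`
zeroed, whose sup norm is that of the restriction of `d` to `I`.
-/

theorem norm_piecewise_zero_eq_norm_restrict {ι : Type*} [Fintype ι] [DecidableEq ι]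
    {E : ι → Type*} [∀ i, SeminormedAddGroup (E i)] (I : Finset ι) (f : ∀ i, E i) :
    ‖I.piecewise f 0‖ = ‖fun i : I => f i‖ := by
  apply le_antisymm
  · refine (pi_norm_le_iff_of_nonneg (norm_nonneg _)).2 fun i => ?_
    by_cases hi : i ∈ I
    · rw [I.piecewise_eq_of_mem _ _ hi]
      exact norm_le_pi_norm (fun j : I => f j) ⟨i, hi⟩
    · rw [I.piecewise_eq_of_notMem _ _ hi, Pi.zero_apply, norm_zero]
      exact norm_nonneg _
  · refine (pi_norm_le_iff_of_nonneg (norm_nonneg _)).2 fun i => ?_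
    have := norm_le_pi_norm (I.piecewise f 0) i
    rwa [I.piecewise_eq_of_mem _ _ i.2] at this

theorem blockSupp_le_of_eq_zero_on {p : ℕ} {n : Fin p → ℕ} (I : Finset (Fin p))
    (v : ∀ i : Fin p, Fin (n i) → ℝ) (hv : ∀ i ∈ I, v i = 0) :
    blockSupp v ≤ p - I.card := by
  have hsub : (Finset.univ.filter fun i => v i ≠ 0) ⊆ Iᶜ := fun i hi =>
    Finset.mem_compl.2 fun hI => (Finset.mem_filter.1 hi).2 (hv i hI)
  calc blockSupp v ≤ Iᶜ.card := Finset.card_le_card hsub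
    _ = p - I.card := by rw [Finset.card_compl, Fintype.card_fin]

theorem stmt2_general {X : Type*} {p k : ℕ} {n : Fin p → ℕ}
    (Φ : X → ∀ i : Fin p, Fin (n i) → ℝ)
    (M : ℝ)
    (h : ∀ x₁ x₂ : X, ∀ e : ∀ i : Fin p, Fin (n i) → ℝ,
      blockSupp e ≤ k → ‖Φ x₁ - Φ x₂‖ ≤ M * ‖Φ x₁ - Φ x₂ + e‖) :
    ∀ I : Finset (Fin p), p - k ≤ I.card →
      ∀ x₁ x₂ : X, ‖Φ x₁ - Φ x₂‖ ≤ M * ‖blockProj I (Φ x₁) - blockProj I (Φ x₂)‖ := by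
  intro I hI x₁ x₂
  set d := Φ x₁ - Φ x₂
  have he : blockSupp (I.piecewise d 0 - d) ≤ k := by
    refine (blockSupp_le_of_eq_zero_on I _ fun i hi => ?_).trans (by omega)
    rw [Pi.sub_apply, I.piecewise_eq_of_mem _ _ hi, sub_self]
  have key := h x₁ x₂ _ he
  rwa [add_sub_cancel, norm_piecewise_zero_eq_norm_restrict] at key

theorem stmt2 {X : Type*} {p k : ℕ} {n : Fin p → ℕ}
    (Φ : X → ∀ i : Fin p, Fin (n i) → ℝ)
    (M : ℝ) (hM : 0 ≤ M)
    (h : ∀ x₁ x₂ : X, ∀ e : ∀ i : Fin p, Fin (n i) → ℝ,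
      blockSupp e ≤ k → ‖Φ x₁ - Φ x₂‖ ≤ M * ‖Φ x₁ - Φ x₂ + e‖) :
    ∀ I : Finset (Fin p), p - k ≤ I.card →
      ∀ x₁ x₂ : X, ‖Φ x₁ - Φ x₂‖ ≤ M * ‖blockProj I (Φ x₁) - blockProj I (Φ x₂)‖ :=
  stmt2_general Φ M h
end

section
/- Let Φ : X → ∏_{i=1}^p ℝ^{n_i} and M ≥ 0. Suppose for every index set I ⊆ {1,...,p} with |I| ≥ p−k, ‖Φ(x₁) − Φ(x₂)‖ ≤ M·‖Φ_I(x₁) − Φ_I(x₂)‖ for all x₁, x₂ ∈ X (sup norm). Then for all x₁, x₂ ∈ X and all e with at most k nonzero blocks, ‖Φ(x₁) − Φ(x₂)‖ ≤ M·‖Φ(x₁) − Φ(x₂) + e‖. -/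
open scoped Classical

/- Choose `I` to be the blocks on which `e` vanishes: `|I| ≥ p - k`, the perturbation `e`
is invisible to `π_I`, and `π_I` does not increase the sup norm. -/

section BlockProj

variable {p : ℕ} {n : Fin p → ℕ}

lemma norm_blockProj_le (I : Finset (Fin p)) (v : ∀ i : Fin p, Fin (n i) → ℝ) :
    ‖blockProj I v‖ ≤ ‖v‖ :=
  (pi_norm_le_iff_of_nonneg (norm_nonneg v)).2 fun i => norm_le_pi_norm v i

lemma blockProj_sub (I : Finset (Fin p)) (v w : ∀ i : Fin p, Fin (n i) → ℝ) :
    blockProj I (v - w) = blockProj I v - blockProj I w :=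
  rfl

lemma blockProj_add_of_forall_eq_zero {I : Finset (Fin p)} {e : ∀ i : Fin p, Fin (n i) → ℝ}
    (he : ∀ i ∈ I, e i = 0) (v : ∀ i : Fin p, Fin (n i) → ℝ) :
    blockProj I (v + e) = blockProj I v := by
  funext i
  simp [blockProj, he i i.2]

lemma sub_blockSupp_le_card_filter_eq_zero (e : ∀ i : Fin p, Fin (n i) → ℝ) :
    p - blockSupp e ≤ (Finset.univ.filter fun i => e i = 0).card := by
  have hsplit := Finset.card_filter_add_card_filter_not (s := Finset.univ) (fun i => e i = 0)
  simp only [Finset.card_univ, Fintype.card_fin] at hsplit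
  simp only [blockSupp, ne_eq]
  omega

end BlockProj

theorem stmt3 {X : Type*} {p k : ℕ} {n : Fin p → ℕ}
    (Φ : X → ∀ i : Fin p, Fin (n i) → ℝ)
    (M : ℝ) (hM : 0 ≤ M)
    (h : ∀ I : Finset (Fin p), p - k ≤ I.card →
      ∀ x₁ x₂ : X, ‖Φ x₁ - Φ x₂‖ ≤ M * ‖blockProj I (Φ x₁) - blockProj I (Φ x₂)‖) :
    ∀ x₁ x₂ : X, ∀ e : ∀ i : Fin p, Fin (n i) → ℝ,
      blockSupp e ≤ k → ‖Φ x₁ - Φ x₂‖ ≤ M * ‖Φ x₁ - Φ x₂ + e‖ := by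
  intro x₁ x₂ e he
  set I := Finset.univ.filter fun i => e i = 0
  have hI : p - k ≤ I.card :=
    (Nat.sub_le_sub_left he p).trans (sub_blockSupp_le_card_filter_eq_zero e)
  have he_I : ∀ i ∈ I, e i = 0 := fun i hi => (Finset.mem_filter.1 hi).2
  calc ‖Φ x₁ - Φ x₂‖ ≤ M * ‖blockProj I (Φ x₁) - blockProj I (Φ x₂)‖ := h I hI x₁ x₂
    _ = M * ‖blockProj I (Φ x₁ - Φ x₂ + e)‖ := by
      rw [blockProj_add_of_forall_eq_zero he_I, blockProj_sub]
    _ ≤ M * ‖Φ x₁ - Φ x₂ + e‖ := by gcongr; exact norm_blockProj_le I _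
end

section
/- Suppose Φ : X → ∏_{i=1}^p ℝ^{n_i} is 2q-redundant and there is a decomposition ẑ = Φ(x) + r + e where r, e are block vectors, r = 0, e has at most q nonzero blocks, and suppose a compact-image assumption holds. Let I ⊆ {1,...,p} with |I| = p−q. Then e_I = 0 (all blocks of e with index in I vanish) if and only if ẑ_I ∈ Φ_I(X), where ẑ_I and Φ_I denote the restriction to blocks in I. -/
open scoped Classical

section Blocks

variable {p : ℕ} {n : Fin p → ℕ}

theorem blockProj_eq_blockProj_iff {I : Finset (Fin p)} {u v : ∀ i : Fin p, Fin (n i) → ℝ} :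
    blockProj I u = blockProj I v ↔ ∀ i ∈ I, u i = v i := by
  simp only [funext_iff, blockProj, Subtype.forall]

theorem card_sub_blockSupp_le_card_filter (I : Finset (Fin p))
    (e : ∀ i : Fin p, Fin (n i) → ℝ) :
    I.card - blockSupp e ≤ (I.filter fun i => e i = 0).card := by
  have hsupp : (I.filter fun i => ¬e i = 0).card ≤ blockSupp e :=
    Finset.card_le_card fun i hi => by
      simp only [Finset.mem_filter] at hi
      simp [hi.2]
  have hsplit := Finset.card_filter_add_card_filter_not (s := I) (p := fun i => e i = 0)
  omega

theorem Redundant.eq_of_forall_mem_eq {X : Type*} {Φ : X → ∀ i : Fin p, Fin (n i) → ℝ}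
    {k : ℕ} (hΦ : Redundant Φ k) {J : Finset (Fin p)} (hJ : p - k ≤ J.card) {x y : X}
    (h : ∀ i ∈ J, Φ x i = Φ y i) : Φ x = Φ y :=
  hΦ J hJ ⟨x, rfl⟩ ⟨y, rfl⟩ (blockProj_eq_blockProj_iff.mpr h)

end Blocks

-- On the blocks of `I` where `e` vanishes (at least `p - 2q` of them) the observation agrees with
-- `Φ x'`, so `2q`-redundancy forces `Φ x' = Φ x`, and then `e` vanishes on all of `I`.
theorem stmt4_general {X : Type*} {p q : ℕ} {n : Fin p → ℕ}
    (Φ : X → ∀ i : Fin p, Fin (n i) → ℝ)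
    (hred : Redundant Φ (2 * q))
    (x : X) (zhat r e : ∀ i : Fin p, Fin (n i) → ℝ)
    (hz : zhat = Φ x + r + e) (hr : r = 0) (he : blockSupp e ≤ q)
    (I : Finset (Fin p)) (hI : I.card = p - q) :
    (∀ i ∈ I, e i = 0) ↔
      blockProj I zhat ∈ Set.range (fun x' => blockProj I (Φ x')) := by
  subst hz hr
  simp only [Set.mem_range, blockProj_eq_blockProj_iff, add_zero, Pi.add_apply]
  constructor
  · intro h
    exact ⟨x, fun i hi => by rw [h i hi, add_zero]⟩
  · rintro ⟨x', hx'⟩ i hi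
    have hJ : p - 2 * q ≤ (I.filter fun i => e i = 0).card := by
      have := card_sub_blockSupp_le_card_filter I e
      omega
    have hΦ : Φ x' = Φ x := hred.eq_of_forall_mem_eq hJ fun j hj => by
      obtain ⟨hjI, hej⟩ := Finset.mem_filter.mp hj
      rw [hx' j hjI, hej, add_zero]
    have := hx' i hi
    rwa [hΦ, left_eq_add] at this

theorem stmt4 {X : Type*} [TopologicalSpace X] {p q : ℕ} {n : Fin p → ℕ}
    (Φ : X → ∀ i : Fin p, Fin (n i) → ℝ)
    (hred : Redundant Φ (2 * q))
    (hcomp : IsCompact (Set.range Φ))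
    (x : X) (zhat r e : ∀ i : Fin p, Fin (n i) → ℝ)
    (hz : zhat = Φ x + r + e) (hr : r = 0) (he : blockSupp e ≤ q)
    (I : Finset (Fin p)) (hI : I.card = p - q) :
    (∀ i ∈ I, e i = 0) ↔
      blockProj I zhat ∈ Set.range (fun x' => blockProj I (Φ x')) :=
  stmt4_general Φ hred x zhat r e hz hr he I hI
end

section
/- Let A ∈ ℝ^{n×n} and suppose its characteristic polynomial factors as γ_A(s) = ∏_{j=1}^l γ^j(s) with the γ^j pairwise coprime. Let A be block-diagonal, A = diag(A¹,...,Aˡ) with char(A^j) = γ^j. Let C = [C¹, C², ..., Cˡ] be a row vector partitioned conformably, and x = (x¹,...,xˡ). If C·A^{k-1}·x = 0 for all k = 1,...,n, then C^j·(A^j)^{k-1}·x^j = 0 for all j = 1,...,l and all k = 1,...,n. -/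
/-!
For `B = diag(A¹, …, Aˡ)` of size `n`, Cayley–Hamilton (reduce `q` modulo `χ_B`) propagates the
vanishing of `c ⬝ᵥ Bᵏ *ᵥ x` for `k < n` to `c ⬝ᵥ q(B) *ᵥ x = 0` for every polynomial `q`.
Since `γʲ` is coprime to `∏_{i ≠ j} γⁱ`, Bézout gives a polynomial `e` with `e(Aʲ) = 1` and
`e(Aⁱ) = 0` for `i ≠ j`; for `q = Xᵏ e` the matrix `q(B)` is block diagonal with the single
nonzero block `(Aʲ)ᵏ`.
-/

open Matrix Polynomial

theorem Polynomial.exists_aeval_eq_one_and_aeval_eq_zero {R ι : Type*} [CommRing R] [Finite ι]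
    {S : ι → Type*} [∀ i, Ring (S i)] [∀ i, Algebra R (S i)] (a : ∀ i, S i) (P : ι → R[X])
    (hP : ∀ i, aeval (a i) (P i) = 0) (hcop : Pairwise fun i i' => IsCoprime (P i) (P i'))
    (j : ι) : ∃ e : R[X], aeval (a j) e = 1 ∧ ∀ i ≠ j, aeval (a i) e = 0 := by
  classical
  cases nonempty_fintype ι
  obtain ⟨u, v, huv⟩ : IsCoprime (P j) (∏ i ∈ Finset.univ.erase j, P i) :=
    IsCoprime.prod_right fun i hi => hcop (Finset.ne_of_mem_erase hi).symm
  refine ⟨v * ∏ i ∈ Finset.univ.erase j, P i, ?_, fun i hi => ?_⟩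
  · simpa [hP] using congrArg (aeval (a j)) huv
  · rw [← Finset.mul_prod_erase _ _ (Finset.mem_erase.2 ⟨hi, Finset.mem_univ i⟩)]
    simp [hP]

namespace Matrix

variable {R : Type*} [CommRing R]

theorem dotProduct_aeval_mulVec_eq_zero {n : Type*} [Fintype n] [DecidableEq n]
    (B : Matrix n n R) (c x : n → R)
    (h : ∀ k < Fintype.card n, c ⬝ᵥ (B ^ k) *ᵥ x = 0) (q : R[X]) :
    c ⬝ᵥ aeval B q *ᵥ x = 0 := by
  nontriviality R
  rcases isEmpty_or_nonempty n with hn | hn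
  · simp [dotProduct]
  have hχ : B.charpoly ≠ 1 := fun h1 => by
    simpa [h1, eq_comm, Fintype.card_ne_zero] using B.charpoly_natDegree_eq_dim
  have hdeg : (q %ₘ B.charpoly).natDegree < Fintype.card n :=
    B.charpoly_natDegree_eq_dim ▸ natDegree_modByMonic_lt q B.charpoly_monic hχ
  rw [aeval_eq_aeval_mod_charpoly, aeval_eq_sum_range' hdeg, sum_mulVec, dotProduct_sum]
  exact Finset.sum_eq_zero fun k hk => by
    rw [smul_mulVec, dotProduct_smul, h k (Finset.mem_range.mp hk), smul_zero]

variable {ι : Type*} [Fintype ι] [DecidableEq ι] {m : ι → Type*} [∀ i, Fintype (m i)]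

theorem aeval_blockDiagonal' [∀ i, DecidableEq (m i)] (A : ∀ i, Matrix (m i) (m i) R)
    (p : R[X]) : aeval (blockDiagonal' A) p = blockDiagonal' fun i => aeval (A i) p := by
  induction p using Polynomial.induction_on' with
  | add p q hp hq => simp only [map_add, hp, hq, ← blockDiagonal'_add]; rfl
  | monomial k a =>
    simp only [aeval_monomial, ← Algebra.smul_def, ← blockDiagonal'_pow, ← blockDiagonal'_smul]
    rfl

theorem dotProduct_blockDiagonal'_mulVec (M : ∀ i, Matrix (m i) (m i) R)
    (c x : (Σ i, m i) → R) :
    c ⬝ᵥ blockDiagonal' M *ᵥ x = ∑ i, (fun a => c ⟨i, a⟩) ⬝ᵥ M i *ᵥ fun a => x ⟨i, a⟩ := by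
  simp only [dotProduct, mulVec, ← Finset.univ_sigma_univ, Finset.sum_sigma, blockDiagonal'_apply,
    dite_mul, zero_mul, Finset.sum_dite_irrel, Finset.sum_const_zero, Finset.sum_dite_eq,
    Finset.mem_univ, if_true]
  rfl

end Matrix

theorem stmt14 {l : ℕ} {m : Fin l → ℕ}
    (A : ∀ j : Fin l, Matrix (Fin (m j)) (Fin (m j)) ℝ)
    (hcop : ∀ j₁ j₂ : Fin l, j₁ ≠ j₂ → IsCoprime (A j₁).charpoly (A j₂).charpoly)
    (c x : ((j : Fin l) × Fin (m j)) → ℝ)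
    (h : ∀ k : ℕ, k < Fintype.card ((j : Fin l) × Fin (m j)) →
      c ⬝ᵥ ((Matrix.blockDiagonal' A) ^ k).mulVec x = 0) :
    ∀ j : Fin l, ∀ k : ℕ, k < Fintype.card ((j : Fin l) × Fin (m j)) →
      (fun i => c ⟨j, i⟩) ⬝ᵥ ((A j) ^ k).mulVec (fun i => x ⟨j, i⟩) = 0 := by
  intro j k _
  obtain ⟨e, hej, hei⟩ := exists_aeval_eq_one_and_aeval_eq_zero A (fun i => (A i).charpoly)
    (fun i => aeval_self_charpoly (A i)) hcop j
  have hq := dotProduct_aeval_mulVec_eq_zero _ c x h (X ^ k * e)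
  rw [aeval_blockDiagonal', dotProduct_blockDiagonal'_mulVec,
    Finset.sum_eq_single_of_mem j (Finset.mem_univ j)] at hq
  · simpa [hej] using hq
  · intro i _ hi
    simp [hei i hi]
end

section
/- Let Φ_i : 𝒳 → ℝ^{n_i}, i ∈ {1,...,p}, and suppose there are invertible maps T_i and a change of coordinates x ↦ (𝗑¹,...,𝗑ˡ) such that T_i(Φ_i(x)) = (φ_i^j(𝗑^j))_{j ∈ N_i} for index sets N_i ⊆ {1,...,l}. Define P_j = { i : j ∈ N_i } and Ψ^j(x) = (φ_i^j(𝗑^j))_{i ∈ P_j}. If every Ψ^j is 2q-redundant (with respect to removing blocks indexed by subsets of P_j), then Φ = (Φ_1,...,Φ_p) is 2q-redundant. -/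
/-! Since `T i` is injective, `Φ i x` is determined by the blocks `φ i j (𝗑ʲ)`, `j ∈ N i`.
Removing a set of at most `2q` indices from `{1, …, p}` removes at most `2q` of the indices of
each `P j`, so the `2q`-redundancy of `Ψ^j` recovers every block, hence every `Φ i x`. -/

open scoped Classical

open Finset

theorem Finset.card_sub_le_card_inter {α : Type*} [DecidableEq α] {S I P : Finset α} {k : ℕ}
    (hI : I ⊆ S) (hP : P ⊆ S) (hcard : #S - k ≤ #I) : #P - k ≤ #(I ∩ P) := by
  have hmissing : #P - #(I ∩ P) ≤ #S - #I := by
    rw [← card_sdiff, ← card_sdiff_of_subset hI]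
    exact card_le_card (sdiff_subset_sdiff hP subset_rfl)
  omega

def IsRedundant {ι X : Type*} {Y : ι → Type*} (S : Finset ι) (k : ℕ) (F : ∀ i, X → Y i) : Prop :=
  ∀ I ⊆ S, #S - k ≤ #I → ∀ x₁ x₂, (∀ i ∈ I, F i x₁ = F i x₂) → ∀ i ∈ S, F i x₁ = F i x₂

theorem IsRedundant.of_blocks {ι κ X : Type*} [Fintype ι] [DecidableEq ι] [DecidableEq κ]
    {Y : ι → Type*} {Z : κ → ι → Type*} {k : ℕ} (Φ : ∀ i, X → Y i) (ψ : ∀ j i, X → Z j i)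
    (N : ι → Finset κ) (hΦ : ∀ i x₁ x₂, Φ i x₁ = Φ i x₂ ↔ ∀ j ∈ N i, ψ j i x₁ = ψ j i x₂)
    (hψ : ∀ j, IsRedundant (univ.filter (j ∈ N ·)) k (ψ j)) :
    IsRedundant univ k Φ := by
  intro I hIS hI x₁ x₂ hagree i _
  refine (hΦ i x₁ x₂).2 fun j hj => ?_
  refine hψ j (I ∩ univ.filter (j ∈ N ·)) inter_subset_right
    (card_sub_le_card_inter hIS (subset_univ _) hI) x₁ x₂ (fun i' hi' => ?_) i (by simpa using hj)
  rw [mem_inter, mem_filter] at hi'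
  exact (hΦ i' x₁ x₂).1 (hagree i' hi'.1) j hi'.2.2

theorem stmt17_general {X : Type*} {p l q : ℕ} {n : Fin p → ℕ} {m : Fin l → ℕ}
    {d : Fin p → Fin l → ℕ}
    (Φ : ∀ i : Fin p, X → Fin (n i) → ℝ)
    (N : Fin p → Finset (Fin l))
    (T : ∀ i : Fin p, (Fin (n i) → ℝ) ≃ (∀ j : ↥(N i), Fin (d i j) → ℝ))
    (Tx : X → ∀ j : Fin l, Fin (m j) → ℝ)
    (φ : ∀ i : Fin p, ∀ j : Fin l, (Fin (m j) → ℝ) → Fin (d i j) → ℝ)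
    (hdec : ∀ i : Fin p, ∀ x : X, T i (Φ i x) = fun j : ↥(N i) => φ i j.1 (Tx x j.1))
    -- every Ψ^j is 2q-redundant
    (hΨ : ∀ j : Fin l, ∀ I : Finset (Fin p),
      I ⊆ Finset.univ.filter (fun i : Fin p => j ∈ N i) →
      (Finset.univ.filter (fun i : Fin p => j ∈ N i)).card - 2 * q ≤ I.card →
      ∀ x₁ x₂ : X, (∀ i ∈ I, φ i j (Tx x₁ j) = φ i j (Tx x₂ j)) →
        ∀ i ∈ Finset.univ.filter (fun i : Fin p => j ∈ N i),
          φ i j (Tx x₁ j) = φ i j (Tx x₂ j)) :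
    -- Φ is 2q-redundant
    ∀ I : Finset (Fin p), p - 2 * q ≤ I.card →
      ∀ x₁ x₂ : X, (∀ i ∈ I, Φ i x₁ = Φ i x₂) → ∀ i : Fin p, Φ i x₁ = Φ i x₂ := by
  have hblocks : ∀ i x₁ x₂, Φ i x₁ = Φ i x₂ ↔ ∀ j ∈ N i, φ i j (Tx x₁ j) = φ i j (Tx x₂ j) := by
    intro i x₁ x₂
    rw [← (T i).apply_eq_iff_eq, hdec, hdec, funext_iff, Subtype.forall]
  have hΦ : IsRedundant univ (2 * q) Φ :=
    IsRedundant.of_blocks Φ (fun j i x => φ i j (Tx x j)) N hblocks hΨ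
  intro I hI x₁ x₂ hagree i
  exact hΦ I (subset_univ I) (by simpa using hI) x₁ x₂ hagree i (mem_univ i)

theorem stmt17 {X : Type*} {p l q : ℕ} {n : Fin p → ℕ} {m : Fin l → ℕ}
    {d : Fin p → Fin l → ℕ}
    (Φ : ∀ i : Fin p, X → Fin (n i) → ℝ)
    (N : Fin p → Finset (Fin l))
    (T : ∀ i : Fin p, (Fin (n i) → ℝ) ≃ (∀ j : ↥(N i), Fin (d i j) → ℝ))
    (Tx : X → ∀ j : Fin l, Fin (m j) → ℝ) (hTx : Function.Bijective Tx)
    (φ : ∀ i : Fin p, ∀ j : Fin l, (Fin (m j) → ℝ) → Fin (d i j) → ℝ)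
    (hdec : ∀ i : Fin p, ∀ x : X, T i (Φ i x) = fun j : ↥(N i) => φ i j.1 (Tx x j.1))
    -- every Ψ^j is 2q-redundant
    (hΨ : ∀ j : Fin l, ∀ I : Finset (Fin p),
      I ⊆ Finset.univ.filter (fun i : Fin p => j ∈ N i) →
      (Finset.univ.filter (fun i : Fin p => j ∈ N i)).card - 2 * q ≤ I.card →
      ∀ x₁ x₂ : X, (∀ i ∈ I, φ i j (Tx x₁ j) = φ i j (Tx x₂ j)) →
        ∀ i ∈ Finset.univ.filter (fun i : Fin p => j ∈ N i),
          φ i j (Tx x₁ j) = φ i j (Tx x₂ j)) :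
    -- Φ is 2q-redundant
    ∀ I : Finset (Fin p), p - 2 * q ≤ I.card →
      ∀ x₁ x₂ : X, (∀ i ∈ I, Φ i x₁ = Φ i x₂) → ∀ i : Fin p, Φ i x₁ = Φ i x₂ :=
  stmt17_general Φ N T Tx φ hdec hΨ
end

section
/- In the setting of the coordinate decomposition T_i(Φ_i(x)) = (φ_i^j(𝗑^j))_{j∈N_i} with P_j = {i : j ∈ N_i} and Ψ^j(x) = (φ_i^j(𝗑^j))_{i∈P_j}: if Φ = (Φ_1,...,Φ_p) is 2q-redundant, then each Ψ^j is 2q-redundant. -/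
/-!
Fix a block `j` and suppose `x₁, x₂` agree on the `j`-th block observations indexed by
`I ⊆ P_j`. By surjectivity of the coordinate change there is a state `y` whose coordinates are
those of `x₁` except for the `j`-th block, which is copied from `x₂`. Then `Φ_i x₁ = Φ_i y` for
every `i ∈ I` and for every `i ∉ P_j` (such `Φ_i` does not see block `j`), i.e. on at least
`p - 2q` indices. Redundancy of `Φ` gives `Φ x₁ = Φ y`, and reading off the `j`-th block of
`T_i (Φ_i ·)` yields `φ_i^j (x₁^j) = φ_i^j (y^j) = φ_i^j (x₂^j)` for all `i ∈ P_j`.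
-/

open scoped Classical

open Finset

def IsRedundantOn {ι X : Type*} {β : ι → Type*} (f : ∀ i, X → β i) (P : Finset ι) (k : ℕ) :
    Prop :=
  ∀ I ⊆ P, #P - k ≤ #I →
    ∀ x₁ x₂ : X, (∀ i ∈ I, f i x₁ = f i x₂) → ∀ i ∈ P, f i x₁ = f i x₂

theorem Finset.card_sub_le_card_union_compl {ι : Type*} [Fintype ι] [DecidableEq ι]
    {I P : Finset ι} {k : ℕ} (hIP : I ⊆ P) (hI : #P - k ≤ #I) :
    Fintype.card ι - k ≤ #(I ∪ Pᶜ) := by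
  have hdisj : Disjoint I Pᶜ := disjoint_compl_right.mono_left hIP
  rw [card_union_of_disjoint hdisj, card_compl]
  have := card_le_univ P
  omega

section BlockDecomposition

variable {ι κ X : Type*} {α : ι → Type*} {β : κ → Type*} {γ : ι → κ → Type*}
  {Φ : ∀ i, X → α i} {N : ι → Finset κ} {T : ∀ i, α i ≃ ∀ j : N i, γ i j}
  {Tx : X → ∀ j, β j} {φ : ∀ i j, β j → γ i j}

theorem eq_of_forall_mem_blocks
    (hdec : ∀ i x, T i (Φ i x) = fun j : N i => φ i j.1 (Tx x j.1)) {i : ι} {x y : X}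
    (h : ∀ j ∈ N i, φ i j (Tx x j) = φ i j (Tx y j)) : Φ i x = Φ i y :=
  (T i).injective <| by
    rw [hdec, hdec]
    funext j
    exact h j.1 j.2

theorem block_eq_of_eq
    (hdec : ∀ i x, T i (Φ i x) = fun j : N i => φ i j.1 (Tx x j.1)) {i : ι} {x y : X}
    (h : Φ i x = Φ i y) {j : κ} (hj : j ∈ N i) : φ i j (Tx x j) = φ i j (Tx y j) := by
  simpa only [hdec] using congrArg (T i · ⟨j, hj⟩) h

theorem IsRedundantOn.block [Fintype ι] [DecidableEq κ]
    (hdec : ∀ i x, T i (Φ i x) = fun j : N i => φ i j.1 (Tx x j.1))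
    (hTx : Function.Surjective Tx) {k : ℕ} (hΦ : IsRedundantOn Φ univ k) (j : κ) :
    IsRedundantOn (fun i x => φ i j (Tx x j)) {i | j ∈ N i} k := by
  intro I hIP hI x₁ x₂ hx i hi
  set P : Finset ι := {i | j ∈ N i}
  obtain ⟨y, hy⟩ := hTx (Function.update (Tx x₁) j (Tx x₂ j))
  have hyj : Tx y j = Tx x₂ j := by rw [hy, Function.update_self]
  have hy_ne {j'} (hj' : j' ≠ j) : Tx x₁ j' = Tx y j' := by rw [hy, Function.update_of_ne hj']
  have hx₁y : ∀ i' ∈ I ∪ Pᶜ, Φ i' x₁ = Φ i' y := by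
    intro i' hi'
    refine eq_of_forall_mem_blocks hdec fun j' hj' => ?_
    by_cases hj'j : j' = j
    · subst hj'j
      rcases mem_union.1 hi' with hi' | hi'
      · rw [hyj]
        exact hx i' hi'
      · exact absurd hj' (by simpa [P] using hi')
    · rw [hy_ne hj'j]
  have hcard : #(univ : Finset ι) - k ≤ #(I ∪ Pᶜ) := by
    rw [card_univ]
    exact card_sub_le_card_union_compl hIP hI
  have hΦy := hΦ _ (subset_univ _) hcard x₁ y hx₁y i (mem_univ i)
  exact (block_eq_of_eq hdec hΦy (mem_filter.1 hi).2).trans (congrArg _ hyj)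

end BlockDecomposition

theorem stmt18 {X : Type*} {p l q : ℕ} {n : Fin p → ℕ} {m : Fin l → ℕ}
    {d : Fin p → Fin l → ℕ}
    (Φ : ∀ i : Fin p, X → Fin (n i) → ℝ)
    (N : Fin p → Finset (Fin l))
    (T : ∀ i : Fin p, (Fin (n i) → ℝ) ≃ (∀ j : ↥(N i), Fin (d i j) → ℝ))
    (Tx : X → ∀ j : Fin l, Fin (m j) → ℝ) (hTx : Function.Bijective Tx)
    (φ : ∀ i : Fin p, ∀ j : Fin l, (Fin (m j) → ℝ) → Fin (d i j) → ℝ)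
    (hdec : ∀ i : Fin p, ∀ x : X, T i (Φ i x) = fun j : ↥(N i) => φ i j.1 (Tx x j.1))
    -- Φ is 2q-redundant
    (hΦ : ∀ I : Finset (Fin p), p - 2 * q ≤ I.card →
      ∀ x₁ x₂ : X, (∀ i ∈ I, Φ i x₁ = Φ i x₂) → ∀ i : Fin p, Φ i x₁ = Φ i x₂) :
    -- every Ψ^j is 2q-redundant
    ∀ j : Fin l, ∀ I : Finset (Fin p),
      I ⊆ Finset.univ.filter (fun i : Fin p => j ∈ N i) →
      (Finset.univ.filter (fun i : Fin p => j ∈ N i)).card - 2 * q ≤ I.card →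
      ∀ x₁ x₂ : X, (∀ i ∈ I, φ i j (Tx x₁ j) = φ i j (Tx x₂ j)) →
        ∀ i ∈ Finset.univ.filter (fun i : Fin p => j ∈ N i),
          φ i j (Tx x₁ j) = φ i j (Tx x₂ j) := by
  have hΦ' : IsRedundantOn Φ univ (2 * q) := fun I _ hI x₁ x₂ hx i _ =>
    hΦ I (by simpa using hI) x₁ x₂ hx i
  exact IsRedundantOn.block hdec hTx.surjective hΦ'
end
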